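/- Let γ, θ ∈ ℝ, let (L_j)_{j∈ℤ} and (R_j)_{j∈ℤ} be reals, and for each j ∈ ℤ let u_j : ℝ × ℝ → ℝ be infinitely differentiable (jointly in (t,x)) and satisfy the diffusion equation ∂_t u_j(t,x) = ∂_x² u_j(t,x) for all (t,x). Suppose that for every t ∈ ℝ: the family (u_j) satisfies the field edge condition with parameters (γ,θ), namely (1−γ/2)(u_j(t,R_j) − u_j(t,L_j)) = (γ/2)(u_{j+1}(t,L_{j+1}) − u_{j−1}(t,R_{j−1})) + (γθ/2)(u_j(t,L_j) + u_j(t,R_j)) − (γθ/2)(u_{j+1}(t,L_{j+1}) + u_{j−1}(t,R_{j−1})), and the family (∂_x u_j) satisfies the field edge condition with parameters (γ,−θ) (equivalently, the flux f_j := −∂_x u_j satisfies the flux edge condition (2.3b)). Then for every n ∈ ℕ and every t ∈ ℝ, the family (∂_x^n u_j) satisfies the field edge condition with parameters (γ, (−1)^n θ): i.e. the condition with +θ for all even n and with −θ for all odd n. -/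

import Mathlib

open ContinuousLinearMap

/-- The field edge condition (2.3a) with parameters `(γ, θ)` for a family `w` of
functions on elements `X_j = (L j, R j)`, `j ∈ ℤ`. -/
def FieldEdgeCond (γ θ : ℝ) (L R : ℤ → ℝ) (w : ℤ → ℝ → ℝ) : Prop :=
  ∀ j : ℤ,
    (1 - γ / 2) * (w j (R j) - w j (L j)) =
      (γ / 2) * (w (j + 1) (L (j + 1)) - w (j - 1) (R (j - 1)))
      + (γ * θ / 2) * (w j (L j) + w j (R j))
      - (γ * θ / 2) * (w (j + 1) (L (j + 1)) + w (j - 1) (R (j - 1)))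


/-- partial derivative in the second variable, as a function on the plane -/
noncomputable def pdx (G : ℝ × ℝ → ℝ) : ℝ × ℝ → ℝ :=
  fun p => fderiv ℝ G p ((0 : ℝ), (1 : ℝ))

lemma hasDerivAt_slice1 {E : Type*} [NormedAddCommGroup E] [NormedSpace ℝ E]
    {G : ℝ × ℝ → E} {t x : ℝ} (hG : DifferentiableAt ℝ G (t, x)) :
    HasDerivAt (fun s => G (s, x)) (fderiv ℝ G (t, x) ((1 : ℝ), (0 : ℝ))) t := by
  have h := hG.hasFDerivAt.comp_hasDerivAt t
    (HasDerivAt.prodMk (hasDerivAt_id t) (hasDerivAt_const t x))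
  simpa [Function.comp_def] using h

lemma hasDerivAt_slice2 {E : Type*} [NormedAddCommGroup E] [NormedSpace ℝ E]
    {G : ℝ × ℝ → E} {t x : ℝ} (hG : DifferentiableAt ℝ G (t, x)) :
    HasDerivAt (fun y => G (t, y)) (fderiv ℝ G (t, x) ((0 : ℝ), (1 : ℝ))) x := by
  have h := hG.hasFDerivAt.comp_hasDerivAt x
    (HasDerivAt.prodMk (hasDerivAt_const x t) (hasDerivAt_id x))
  simpa [Function.comp_def] using h

lemma contDiff_pdx {G : ℝ × ℝ → ℝ} (hG : ContDiff ℝ (⊤ : ℕ∞) G) : ContDiff ℝ (⊤ : ℕ∞) (pdx G) :=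
  (ContinuousLinearMap.apply ℝ ℝ ((0 : ℝ), (1 : ℝ))).contDiff.comp
    (hG.fderiv_right (by simp))

lemma deriv_slice2_eq {G : ℝ × ℝ → ℝ} (hG : ContDiff ℝ (⊤ : ℕ∞) G) (s y : ℝ) :
    deriv (fun y' => G (s, y')) y = pdx G (s, y) :=
  (hasDerivAt_slice2 ((hG.differentiable (by simp)) (s, y))).deriv

/-- Clairaut for curried smooth functions on the plane. -/
lemma clairaut {G : ℝ × ℝ → ℝ} (hG : ContDiff ℝ (⊤ : ℕ∞) G) (t x : ℝ) :
    deriv (fun s => deriv (fun y => G (s, y)) x) t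
      = deriv (fun y => deriv (fun s => G (s, y)) t) x := by
  have hfd : ContDiff ℝ (⊤ : ℕ∞) (fderiv ℝ G) := hG.fderiv_right (by simp)
  have hfd2 : DifferentiableAt ℝ (fderiv ℝ G) (t, x) :=
    (hfd.differentiable (by simp)) (t, x)
  set A := fderiv ℝ (fderiv ℝ G) (t, x) with hA
  have hsymm : A ((1:ℝ), (0:ℝ)) ((0:ℝ), (1:ℝ)) = A ((0:ℝ), (1:ℝ)) ((1:ℝ), (0:ℝ)) :=
    (hG.contDiffAt.isSymmSndFDerivAt (by rw [minSmoothness_of_isRCLikeNormedField]; exact WithTop.coe_le_coe.mpr le_top)) _ _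
  -- left side
  have h1 : (fun s => deriv (fun y => G (s, y)) x) = fun s => pdx G (s, x) :=
    funext fun s => deriv_slice2_eq hG s x
  have hpdx : HasFDerivAt (pdx G)
      ((ContinuousLinearMap.apply ℝ ℝ ((0:ℝ),(1:ℝ))).comp A) (t, x) :=
    (ContinuousLinearMap.apply ℝ ℝ ((0:ℝ),(1:ℝ))).hasFDerivAt.comp _ hfd2.hasFDerivAt
  have hL : deriv (fun s => pdx G (s, x)) t = A ((1:ℝ),(0:ℝ)) ((0:ℝ),(1:ℝ)) := by
    have := (hasDerivAt_slice1 hpdx.differentiableAt).deriv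
    rw [this, hpdx.fderiv]
    rfl
  -- right side
  have h2 : (fun y => deriv (fun s => G (s, y)) t) = fun y => fderiv ℝ G (t, y) ((1:ℝ),(0:ℝ)) :=
    funext fun y => (hasDerivAt_slice1 ((hG.differentiable (by simp)) (t, y))).deriv
  have hpd1 : HasFDerivAt (fun p => fderiv ℝ G p ((1:ℝ),(0:ℝ)))
      ((ContinuousLinearMap.apply ℝ ℝ ((1:ℝ),(0:ℝ))).comp A) (t, x) :=
    (ContinuousLinearMap.apply ℝ ℝ ((1:ℝ),(0:ℝ))).hasFDerivAt.comp _ hfd2.hasFDerivAt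
  have hR : deriv (fun y => fderiv ℝ G (t, y) ((1:ℝ),(0:ℝ))) x
      = A ((0:ℝ),(1:ℝ)) ((1:ℝ),(0:ℝ)) := by
    have := (hasDerivAt_slice2 hpd1.differentiableAt).deriv
    rw [this, hpd1.fderiv]
    rfl
  rw [h1, h2, hL, hR, hsymm]

/-- joint smoothness of iterated partial derivatives in the second variable -/
lemma contDiff_iter : ∀ (n : ℕ) {G : ℝ × ℝ → ℝ}, ContDiff ℝ (⊤ : ℕ∞) G →
    ContDiff ℝ (⊤ : ℕ∞) (fun p : ℝ × ℝ => iteratedDeriv n (fun y => G (p.1, y)) p.2) := by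
  intro n
  induction n with
  | zero => intro G hG; simpa [iteratedDeriv_zero] using hG
  | succ n ih =>
    intro G hG
    have h : (fun p : ℝ × ℝ => iteratedDeriv (n + 1) (fun y => G (p.1, y)) p.2)
        = fun p : ℝ × ℝ => iteratedDeriv n (fun y => pdx G (p.1, y)) p.2 := by
      funext p
      rw [iteratedDeriv_succ']
      congr 1
      funext y
      exact deriv_slice2_eq hG p.1 y
    rw [h]
    exact ih (contDiff_pdx hG)

/-- `∂_t` commutes with `∂_x^n` for smooth functions on the plane -/
lemma swap_iter : ∀ (n : ℕ) {G : ℝ × ℝ → ℝ}, ContDiff ℝ (⊤ : ℕ∞) G → ∀ t x : ℝ,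
    deriv (fun s => iteratedDeriv n (fun y => G (s, y)) x) t
      = iteratedDeriv n (fun y => deriv (fun s => G (s, y)) t) x := by
  intro n
  induction n with
  | zero => intro G hG t x; simp
  | succ n ih =>
    intro G hG t x
    have h1 : (fun s => iteratedDeriv (n + 1) (fun y => G (s, y)) x)
        = fun s => iteratedDeriv n (fun y => pdx G (s, y)) x := by
      funext s
      rw [iteratedDeriv_succ']
      congr 1
      funext y
      exact deriv_slice2_eq hG s y
    rw [h1, ih (contDiff_pdx hG) t x]
    rw [iteratedDeriv_succ']
    congr 1
    funext y
    have h2 : (fun s => pdx G (s, y)) = fun s => deriv (fun y' => G (s, y')) y :=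
      funext fun s => (deriv_slice2_eq hG s y).symm
    rw [h2, clairaut hG t y]

/-- Lemma 3.7 for the diffusion PDE `u_t = u_xx`: if the subgrid fields satisfy
the field edge condition with parameters (γ, θ) and their first spatial
derivatives satisfy it with parameters (γ, −θ), then every `∂_x^n u_j`
satisfies it with parameters `(γ, (−1)^n θ)`. -/
theorem diffusion_edge_condition_derivatives
    (γ θ : ℝ) (L R : ℤ → ℝ)
    (u : ℤ → ℝ → ℝ → ℝ)
    (hu : ∀ j, ContDiff ℝ (⊤ : ℕ∞) (fun p : ℝ × ℝ => u j p.1 p.2))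
    (hpde : ∀ j t x, deriv (fun s => u j s x) t = iteratedDeriv 2 (u j t) x)
    (hec : ∀ t, FieldEdgeCond γ θ L R (fun j x => u j t x))
    (hecd : ∀ t, FieldEdgeCond γ (-θ) L R (fun j x => deriv (u j t) x)) :
    ∀ (n : ℕ) (t : ℝ),
      FieldEdgeCond γ ((-1) ^ n * θ) L R
        (fun j x => iteratedDeriv n (u j t) x) := by
  -- key identity: ∂_t ∂_x^n u = ∂_x^{n+2} u
  have key : ∀ (j : ℤ) (n : ℕ) (t x : ℝ),
      deriv (fun s => iteratedDeriv n (u j s) x) t = iteratedDeriv (n + 2) (u j t) x := by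
    intro j n t x
    have hswap := swap_iter n (hu j) t x
    have h2 : (fun y => deriv (fun s => u j s y) t) = iteratedDeriv 2 (u j t) :=
      funext fun y => hpde j t y
    have h3 : iteratedDeriv (n + 2) (u j t) = iteratedDeriv n (deriv (deriv (u j t))) := by
      rw [show n + 2 = n + 1 + 1 from rfl, iteratedDeriv_succ', iteratedDeriv_succ']
    have h4 : iteratedDeriv 2 (u j t) = deriv (deriv (u j t)) := by
      rw [show (2:ℕ) = 1 + 1 from rfl, iteratedDeriv_succ', iteratedDeriv_one]
    calc deriv (fun s => iteratedDeriv n (u j s) x) t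
        = iteratedDeriv n (fun y => deriv (fun s => u j s y) t) x := hswap
      _ = iteratedDeriv (n + 2) (u j t) x := by rw [h2, h4, ← h3]
  -- differentiability in time, with derivative ∂_x^{n+2} u
  have hA : ∀ (n : ℕ) (t : ℝ) (k : ℤ) (p : ℝ),
      HasDerivAt (fun s => iteratedDeriv n (u k s) p) (iteratedDeriv (n + 2) (u k t) p) t := by
    intro n t k p
    have hGn := contDiff_iter n (hu k)
    have hslice := hasDerivAt_slice1 ((hGn.differentiable (by simp)) (t, p))
    have hd := hslice.differentiableAt.hasDerivAt
    rwa [key k n t p] at hd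
  -- two-step induction
  have main : ∀ n : ℕ,
      (∀ t, FieldEdgeCond γ ((-1) ^ n * θ) L R (fun j x => iteratedDeriv n (u j t) x)) ∧
      (∀ t, FieldEdgeCond γ ((-1) ^ (n+1) * θ) L R (fun j x => iteratedDeriv (n+1) (u j t) x)) := by
    intro n
    induction n with
    | zero =>
      constructor
      · intro t j
        simpa [iteratedDeriv_zero] using hec t j
      · intro t j
        simpa [iteratedDeriv_one, pow_one, neg_one_mul] using hecd t j
    | succ n ih =>
      refine ⟨ih.2, ?_⟩
      intro t j
      have IH := ih.1
      set θ' := ((-1 : ℝ)) ^ n * θ with hθ'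
      have hL := ((hA n t j (R j)).sub (hA n t j (L j))).const_mul (1 - γ / 2)
      have hR := ((((hA n t (j+1) (L (j+1))).sub (hA n t (j-1) (R (j-1)))).const_mul (γ / 2)).add
          (((hA n t j (L j)).add (hA n t j (R j))).const_mul (γ * θ' / 2))).sub
          (((hA n t (j+1) (L (j+1))).add (hA n t (j-1) (R (j-1)))).const_mul (γ * θ' / 2))
      have hfun : (fun s => (1 - γ / 2) *
            (iteratedDeriv n (u j s) (R j) - iteratedDeriv n (u j s) (L j)))
          = (fun s => (γ / 2) * (iteratedDeriv n (u (j+1) s) (L (j+1))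
                - iteratedDeriv n (u (j-1) s) (R (j-1)))
              + (γ * θ' / 2) * (iteratedDeriv n (u j s) (L j) + iteratedDeriv n (u j s) (R j))
              - (γ * θ' / 2) * (iteratedDeriv n (u (j+1) s) (L (j+1))
                + iteratedDeriv n (u (j-1) s) (R (j-1)))) :=
        funext fun s => IH s j
      simp only [Pi.sub_def, Pi.add_def] at hR
      rw [← hfun] at hR
      have hval := hL.unique hR
      have hsgn : γ * ((-1 : ℝ) ^ (n + 1 + 1) * θ) / 2 = γ * θ' / 2 := by
        rw [hθ']; ring
      show (1 - γ / 2) * (iteratedDeriv (n + 2) (u j t) (R j)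
          - iteratedDeriv (n + 2) (u j t) (L j)) = _
      rw [hsgn]
      exact hval
  exact fun n => (main n).1
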